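/- arXiv:0906.1591 — 3 statements merged into one kernel-verified Lean document; each statement's English description precedes it below -/
import Mathlib

section
/- Let R = k[x_1,...,x_d] and I an 𝔪-primary ideal generated by forms of degree n. Then the integral closure of I^m equals 𝔪^{nm} for all m ≥ 1, and consequently the normalized multiplicity satisfies ē_0(I) = n^d. -/
open MvPolynomial Filter

/-- The irrelevant (homogeneous maximal) ideal of `k[x_1, …, x_d]`. -/
noncomputable def mxIdeal (k : Type) [Field k] (d : ℕ) : Ideal (MvPolynomial (Fin d) k) :=
  Ideal.span (Set.range MvPolynomial.X)

/-- `x` is integral over the ideal `I`: it satisfies an equation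
`x^n + c₁x^{n-1} + ⋯ + cₙ = 0` with `cᵢ ∈ Iⁱ`. -/
def isIntegralOverIdeal {R : Type} [CommRing R] (I : Ideal R) (x : R) : Prop :=
  ∃ (n : ℕ) (c : ℕ → R), 0 < n ∧ (∀ i, 1 ≤ i → i ≤ n → c i ∈ I ^ i) ∧
    x ^ n + ∑ i ∈ Finset.range n, c (i + 1) * x ^ (n - (i + 1)) = 0

/-!
Every form of degree `n` lies in `𝔪ⁿ`, so `Iᵐ ⊆ 𝔪ⁿᵐ`, and `𝔪ᵃ` is integrally closed: the
`𝔪`-adic order of a polynomial is additive over a domain, so if `ord x = j < a` and `ord cᵢ ≥ a i`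
then in `xᵀ + ∑ cᵢ xᵀ⁻ⁱ` every term but `xᵀ` has order `> T j`.

Conversely, once `𝔪ˢ ⊆ I`, comparing homogeneous components in `q = ∑ gᵢ fᵢ` gives
`𝔪^(b + n) ⊆ I 𝔪ᵇ` for `b + n ≥ s`, hence `x 𝔪ˢ ⊆ 𝔪^(s + n m) ⊆ Iᵐ 𝔪ˢ` for `x ∈ 𝔪ⁿᵐ`; the
determinant trick on the faithful module `𝔪ˢ` makes `x` integral over `Iᵐ`.

Finally the monomials of degree `< D` form a basis of `R ⧸ 𝔪ᴰ`; there are `C(D + d - 1, d)` of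
them, and `d! C(n m + d - 1, d) / mᵈ = ∏_{i < d} (n + i / m) → nᵈ`.
-/

theorem isIntegralOverIdeal.mono {R : Type} [CommRing R] {K L : Ideal R} (hKL : K ≤ L) {x : R}
    (hx : isIntegralOverIdeal K x) : isIntegralOverIdeal L x := by
  obtain ⟨T, c, hT, hc, heq⟩ := hx
  exact ⟨T, c, hT, fun i hi hiT => Ideal.pow_right_mono hKL i (hc i hi hiT), heq⟩

open Polynomial in
theorem isIntegralOverIdeal_of_monic {R : Type} [CommRing R] [Nontrivial R] {K : Ideal R}
    {p : R[X]} (hp : p.Monic) (hc : ∀ i, p.coeff i ∈ K ^ (p.natDegree - i)) {x : R}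
    (hx : p.eval x = 0) : isIntegralOverIdeal K x := by
  have hdeg : 0 < p.natDegree := by
    by_contra! h
    rw [hp.natDegree_eq_zero.mp (by omega), eval_one] at hx
    exact one_ne_zero hx
  refine ⟨p.natDegree, fun i => p.coeff (p.natDegree - i), hdeg,
    fun i _ hi => by simpa [Nat.sub_sub_self hi] using hc (p.natDegree - i), ?_⟩
  rw [eval_eq_sum_range, Finset.sum_range_succ, hp.coeff_natDegree, one_mul] at hx
  rw [← hx, add_comm, ← Finset.sum_range_reflect (fun i => p.coeff i * x ^ i)]
  refine congrArg (· + _) (Finset.sum_congr rfl fun i _ => ?_)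
  simp only [Nat.sub_sub, add_comm 1 i]

theorem isIntegralOverIdeal_of_forall_mul_mem {R : Type} [CommRing R] [IsDomain R]
    {K J : Ideal R} (hJ : J.FG) (hJ0 : J ≠ ⊥) {x : R} (hx : ∀ z ∈ J, x * z ∈ K * J) :
    isIntegralOverIdeal K x := by
  have : Module.Finite R J := Module.Finite.iff_fg.mpr hJ
  obtain ⟨p, hpm, -, hpc, hpx⟩ :=
    LinearMap.exists_monic_and_natDegree_eq_and_coeff_mem_pow_and_aeval_eq_zero R
      (algebraMap R (Module.End R J) x) K (by
        rintro _ ⟨z, rfl⟩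
        rw [Submodule.mem_smul_top_iff]
        exact hx z z.2)
  refine isIntegralOverIdeal_of_monic hpm hpc ?_
  obtain ⟨z, hzJ, hz0⟩ := Submodule.exists_mem_ne_zero_of_ne_bot hJ0
  rw [Polynomial.aeval_algebraMap_apply_eq_algebraMap_eval] at hpx
  have hpz := congrArg (fun φ : Module.End R J => (φ ⟨z, hzJ⟩ : R)) hpx
  simp only [Module.algebraMap_end_apply, LinearMap.zero_apply, Submodule.coe_smul,
    smul_eq_mul, ZeroMemClass.coe_zero] at hpz
  exact (mul_eq_zero.mp hpz).resolve_right hz0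

namespace MvPolynomial

section Order

variable {σ : Type*} {R : Type*} [CommSemiring R]

theorem mem_pow_idealOfVars_iff_le_order (a : ℕ) (p : MvPolynomial σ R) :
    p ∈ idealOfVars σ R ^ a ↔ (a : ℕ∞) ≤ (p : MvPowerSeries σ R).order := by
  rw [mem_pow_idealOfVars_iff']
  refine ⟨fun h => MvPowerSeries.nat_le_order fun μ hμ => by rw [coeff_coe]; exact h μ hμ,
    fun h μ hμ => ?_⟩
  rw [← coeff_coe]
  exact MvPowerSeries.coeff_of_lt_order ((Nat.cast_lt.mpr hμ).trans_le h)

theorem pow_notMem_pow_idealOfVars [NoZeroDivisors R] [Nontrivial R] {x : MvPolynomial σ R}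
    {j : ℕ} (hx : (x : MvPowerSeries σ R).order = j) (T : ℕ) :
    x ^ T ∉ idealOfVars σ R ^ (T * j + 1) := by
  have hxT : ((x ^ T : MvPolynomial σ R) : MvPowerSeries σ R).order = (T * j : ℕ) := by
    induction T with
    | zero =>
      rw [pow_zero, coe_one, zero_mul, Nat.cast_zero]
      exact MvPowerSeries.weightedOrder_one _
    | succ T ih => rw [pow_succ, coe_mul, MvPowerSeries.order_mul, ih, hx]; push_cast; ring
  rw [mem_pow_idealOfVars_iff_le_order, hxT, Nat.cast_le]
  exact Nat.not_succ_le_self _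

end Order

theorem mem_pow_idealOfVars_of_isIntegralOverIdeal {σ R : Type} [CommRing R] [IsDomain R]
    {a : ℕ} {x : MvPolynomial σ R} (hx : isIntegralOverIdeal (idealOfVars σ R ^ a) x) :
    x ∈ idealOfVars σ R ^ a := by
  obtain ⟨T, c, -, hc, heq⟩ := hx
  rw [mem_pow_idealOfVars_iff_le_order]
  by_contra! hlt
  obtain ⟨j, hj⟩ := ENat.ne_top_iff_exists.mp hlt.ne_top
  rw [eq_comm] at hj
  have hja : j < a := by rwa [hj, Nat.cast_lt] at hlt
  have hxj : x ∈ idealOfVars σ R ^ j := (mem_pow_idealOfVars_iff_le_order _ _).mpr hj.ge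
  have hsum : ∑ i ∈ Finset.range T, c (i + 1) * x ^ (T - (i + 1)) ∈
      idealOfVars σ R ^ (T * j + 1) := by
    refine Ideal.sum_mem _ fun i hi => ?_
    obtain ⟨r, rfl⟩ := Nat.exists_eq_add_of_lt (Finset.mem_range.mp hi)
    have hci : c (i + 1) ∈ idealOfVars σ R ^ (a * (i + 1)) := by
      rw [pow_mul]; exact hc (i + 1) (by omega) (by omega)
    have hxr : x ^ (i + r + 1 - (i + 1)) ∈ idealOfVars σ R ^ (j * r) := by
      rw [show i + r + 1 - (i + 1) = r by omega, pow_mul]; exact Ideal.pow_mem_pow hxj r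
    have hterm := Ideal.mul_mem_mul hci hxr
    rw [← pow_add] at hterm
    exact Ideal.pow_le_pow_right (by nlinarith) hterm
  exact pow_notMem_pow_idealOfVars hj T (eq_neg_of_add_eq_zero_left heq ▸ neg_mem hsum)

section Homogeneous

variable {σ : Type*} {R : Type*} [CommSemiring R]

theorem IsHomogeneous.mem_pow_idealOfVars {p : MvPolynomial σ R} {n : ℕ}
    (hp : p.IsHomogeneous n) : p ∈ idealOfVars σ R ^ n :=
  (mem_pow_idealOfVars_iff _ _).mpr fun μ hμ => by
    rw [hp.degree_eq_sum_deg_support hμ, Finsupp.degree_apply]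

attribute [local instance] gradedAlgebra in
theorem homogeneousComponent_add_mul {p : MvPolynomial σ R} {n : ℕ} (hp : p.IsHomogeneous n)
    (g : MvPolynomial σ R) (b : ℕ) :
    homogeneousComponent (b + n) (g * p) = homogeneousComponent b g * p := by
  simp only [← decomposition.decompose'_apply]
  have := DirectSum.coe_decompose_mul_of_right_mem_of_le (homogeneousSubmodule σ R) (a := g)
    (mem_homogeneousSubmodule n p |>.mpr hp) (Nat.le_add_left n b)
  rwa [Nat.add_sub_cancel] at this

variable {ι : Type*} [Fintype ι] {f : ι → MvPolynomial σ R} {n : ℕ}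

theorem mem_span_mul_pow_idealOfVars (hf : ∀ i, (f i).IsHomogeneous n)
    {q : MvPolynomial σ R} (hq : q ∈ Ideal.span (Set.range f)) {b : ℕ}
    (hqb : q.IsHomogeneous (b + n)) :
    q ∈ Ideal.span (Set.range f) * idealOfVars σ R ^ b := by
  obtain ⟨g, rfl⟩ := Ideal.mem_span_range_iff_exists_fun.mp hq
  rw [← (homogeneousComponent_of_mem hqb).trans (if_pos rfl), map_sum]
  refine Ideal.sum_mem _ fun i _ => ?_
  rw [homogeneousComponent_add_mul (hf i)]
  exact Ideal.mul_mem_mul_rev (Ideal.subset_span ⟨i, rfl⟩)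
    (homogeneousComponent_isHomogeneous b (g i)).mem_pow_idealOfVars

theorem pow_idealOfVars_add_le_span_mul (hf : ∀ i, (f i).IsHomogeneous n) {b : ℕ}
    (hb : idealOfVars σ R ^ (b + n) ≤ Ideal.span (Set.range f)) :
    idealOfVars σ R ^ (b + n) ≤ Ideal.span (Set.range f) * idealOfVars σ R ^ b := by
  rw [pow_idealOfVars_eq_span (b + n), Ideal.span_le]
  rintro _ ⟨μ, hμ, rfl⟩
  refine mem_span_mul_pow_idealOfVars hf (hb ?_) (isHomogeneous_monomial _ hμ)
  rw [pow_idealOfVars_eq_span]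
  exact Ideal.subset_span ⟨μ, hμ, rfl⟩

theorem pow_idealOfVars_le_span_pow_mul (hf : ∀ i, (f i).IsHomogeneous n) {s : ℕ}
    (hs : idealOfVars σ R ^ s ≤ Ideal.span (Set.range f)) (m : ℕ) :
    idealOfVars σ R ^ (s + n * m) ≤ Ideal.span (Set.range f) ^ m * idealOfVars σ R ^ s := by
  induction m with
  | zero => simp
  | succ m ih =>
    calc idealOfVars σ R ^ (s + n * (m + 1))
        = idealOfVars σ R ^ (s + n * m + n) := by ring_nf
      _ ≤ Ideal.span (Set.range f) * idealOfVars σ R ^ (s + n * m) :=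
        pow_idealOfVars_add_le_span_mul hf ((Ideal.pow_le_pow_right (by omega)).trans hs)
      _ ≤ Ideal.span (Set.range f) * (Ideal.span (Set.range f) ^ m * idealOfVars σ R ^ s) :=
        Ideal.mul_mono_right ih
      _ = Ideal.span (Set.range f) ^ (m + 1) * idealOfVars σ R ^ s := by
        rw [← mul_assoc, pow_succ']

end Homogeneous

theorem isIntegralOverIdeal_span_pow_of_mem_pow {σ R : Type} [Finite σ] [CommRing R]
    [IsDomain R] {ι : Type*} [Fintype ι] {f : ι → MvPolynomial σ R} {n : ℕ}
    (hf : ∀ i, (f i).IsHomogeneous n) {s : ℕ}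
    (hs : idealOfVars σ R ^ s ≤ Ideal.span (Set.range f)) {m : ℕ} (hnm : n * m ≠ 0)
    {x : MvPolynomial σ R} (hx : x ∈ idealOfVars σ R ^ (n * m)) :
    isIntegralOverIdeal (Ideal.span (Set.range f) ^ m) x := by
  rcases eq_or_ne x 0 with rfl | hx0
  · exact ⟨1, 0, one_pos, fun _ _ _ => zero_mem _, by simp⟩
  refine isIntegralOverIdeal_of_forall_mul_mem ((idealOfVars_fg σ R).pow (n := s)) ?_
    fun z hz => ?_
  · exact (Submodule.ne_bot_iff _).mpr
      ⟨x ^ s, Ideal.pow_mem_pow (Ideal.pow_le_self hnm hx) s, pow_ne_zero s hx0⟩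
  · refine pow_idealOfVars_le_span_pow_mul hf hs m ?_
    rw [add_comm, pow_add]
    exact Ideal.mul_mem_mul hx hz

theorem isCompl_restrictSupport {σ R : Type*} [CommSemiring R]
    {s t : Set (σ →₀ ℕ)} (h : IsCompl s t) :
    IsCompl (restrictSupport R s) (restrictSupport R t) :=
  (Submodule.orderIsoMapComap (AddMonoidAlgebra.coeffLinearEquiv R)).symm.isCompl
    ⟨Finsupp.disjoint_supported_supported h.disjoint,
      Finsupp.codisjoint_supported_supported h.codisjoint⟩

theorem finrank_quotient_pow_idealOfVars {σ K : Type*} [Field K] (D : ℕ) :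
    Module.finrank K (MvPolynomial σ K ⧸ idealOfVars σ K ^ D) =
      {μ : σ →₀ ℕ | μ.degree < D}.ncard := by
  have hcompl : IsCompl ((idealOfVars σ K ^ D).restrictScalars K)
      (restrictSupport K {μ : σ →₀ ℕ | μ.degree < D}) := by
    rw [pow_idealOfVars, restrictScalars_restrictSupportIdeal]
    refine isCompl_restrictSupport ?_
    rw [show {μ : σ →₀ ℕ | μ.degree < D} = (Finsupp.degree ⁻¹' Set.Ici D)ᶜ by ext; simp]
    exact isCompl_compl
  rw [((Submodule.Quotient.restrictScalarsEquiv K _).symm.trans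
      (Submodule.quotientEquivOfIsCompl _ _ hcompl)).finrank_eq,
    Module.finrank_eq_nat_card_basis (basisRestrictSupport K _), Nat.card_coe_set_eq]

end MvPolynomial

theorem Finsupp.ncard_setOf_degree_le (σ : Type*) [Fintype σ] (e : ℕ) :
    {μ : σ →₀ ℕ | μ.degree ≤ e}.ncard = (e + Fintype.card σ).choose (Fintype.card σ) := by
  classical
  have hset : {μ : σ →₀ ℕ | μ.degree ≤ e} =
      ((Finset.range (e + 1)).biUnion (Finset.univ.finsuppAntidiag ·) : Finset (σ →₀ ℕ)) := by
    ext μ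
    simp [Finsupp.degree_eq_sum]
  rw [hset, Set.ncard_coe_finset, Finset.card_biUnion, ← Nat.sum_range_multichoose]
  · simp_rw [Finset.card_finsuppAntidiag_nat_eq_multichoose, Finset.card_univ]
  · intro i _ j _ hij
    refine Finset.disjoint_left.mpr fun μ hi hj => hij ?_
    rw [Finset.mem_finsuppAntidiag] at hi hj
    exact hi.1.symm.trans hj.1

theorem tendsto_ascFactorial_mul_div_pow (n d : ℕ) :
    Tendsto (fun m : ℕ => ((n * m).ascFactorial d : ℝ) / (m : ℝ) ^ d) atTop
      (nhds ((n : ℝ) ^ d)) := by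
  have hprod : ∀ᶠ m : ℕ in atTop, ∏ i ∈ Finset.range d, ((n : ℝ) + i / m) =
      ((n * m).ascFactorial d : ℝ) / (m : ℝ) ^ d := by
    filter_upwards [eventually_ne_atTop 0] with m hm
    rw [Nat.ascFactorial_eq_prod_range, Nat.cast_prod, Finset.pow_eq_prod_const,
      ← Finset.prod_div_distrib]
    refine Finset.prod_congr rfl fun i _ => ?_
    field_simp
    push_cast
    ring
  refine Tendsto.congr' hprod ?_
  rw [Finset.pow_eq_prod_const]
  refine tendsto_finsetProd _ fun i _ => ?_
  simpa using tendsto_const_nhds.add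
    (tendsto_const_nhds.div_atTop (tendsto_natCast_atTop_atTop (R := ℝ)))

/-- Let `R = k[x_1, …, x_d]` and `I` an `𝔪`-primary ideal generated by forms of degree
`n`.  Then the integral closure of `I^m` is `𝔪^{nm}` for all `m ≥ 1`, and consequently
the normalized multiplicity satisfies `ē₀(I) = n^d` (expressed as the limit of
`d! · λ(R/closure(I^m)) / m^d`). -/
theorem integral_closure_of_powers {k : Type} [Field k] (d n N : ℕ) (hn : 0 < n)
    (f : Fin N → MvPolynomial (Fin d) k)
    (hf : ∀ i, (f i).IsHomogeneous n)
    (I : Ideal (MvPolynomial (Fin d) k))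
    (hI : I = Ideal.span (Set.range f))
    (hprim : I.radical = mxIdeal k d) :
    (∀ m : ℕ, 1 ≤ m →
      {x | isIntegralOverIdeal (I ^ m) x} = ((mxIdeal k d ^ (n * m) : Ideal _) : Set _)) ∧
    Tendsto (fun m : ℕ =>
        (Module.finrank k
          (MvPolynomial (Fin d) k ⧸ Ideal.span {x | isIntegralOverIdeal (I ^ m) x}) : ℝ)
        * d.factorial / (m : ℝ) ^ d)
      atTop (nhds ((n : ℝ) ^ d)) := by
  subst hI
  rw [show mxIdeal k d = idealOfVars (Fin d) k from rfl] at hprim ⊢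
  obtain ⟨s, hs⟩ := Ideal.exists_pow_le_of_le_radical_of_fg hprim.ge (idealOfVars_fg (Fin d) k)
  have hIn : Ideal.span (Set.range f) ≤ idealOfVars (Fin d) k ^ n :=
    Ideal.span_le.mpr (Set.range_subset_iff.mpr fun i => (hf i).mem_pow_idealOfVars)
  have closure_eq (m : ℕ) (hm : 1 ≤ m) :
      {x | isIntegralOverIdeal (Ideal.span (Set.range f) ^ m) x} =
        ((idealOfVars (Fin d) k ^ (n * m) : Ideal _) : Set _) :=
    Set.ext fun x =>
      ⟨fun hx => mem_pow_idealOfVars_of_isIntegralOverIdeal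
          (hx.mono ((Ideal.pow_right_mono hIn m).trans_eq (pow_mul _ n m).symm)),
        isIntegralOverIdeal_span_pow_of_mem_pow hf hs (by positivity)⟩
  refine ⟨closure_eq, (tendsto_ascFactorial_mul_div_pow n d).congr' ?_⟩
  filter_upwards [eventually_ge_atTop 1] with m hm
  obtain ⟨e, he⟩ := Nat.exists_eq_add_one_of_ne_zero (by positivity : n * m ≠ 0)
  have hdeg : {μ : Fin d →₀ ℕ | μ.degree < e + 1} = {μ | μ.degree ≤ e} := by
    simp_rw [Nat.lt_succ_iff]
  rw [closure_eq m hm, Ideal.span_eq, he, finrank_quotient_pow_idealOfVars, hdeg,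
    Finsupp.ncard_setOf_degree_le, Fintype.card_fin, Nat.ascFactorial_eq_factorial_mul_choose]
  push_cast
  ring
end

section
/- Let I = (a_1,...,a_n) be an ideal of a commutative ring R, S = R[T_1,...,T_n], L the defining ideal of the Rees algebra via T_i ↦ a_i t. Let f(T) ∈ L be homogeneous of T-degree d, written f = f_1(T)T_1 + ... + f_n(T)T_n with each f_i of degree d−1. If f_1(T)a_1 + ... + f_n(T)a_n = 0 in S, then f ∈ S_{d−1}·L_1. -/
open MvPolynomial

/-- The defining ideal `L` of the Rees algebra of the ideal generated by `a`,
via `T_i ↦ a_i t`. -/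
noncomputable def reesIdeal {R : Type} [CommRing R] {m : ℕ} (a : Fin m → R) :
    Ideal (MvPolynomial (Fin m) R) :=
  RingHom.ker (MvPolynomial.aeval (fun i => Polynomial.C (a i) * Polynomial.X) :
    MvPolynomial (Fin m) R →ₐ[R] Polynomial R).toRingHom

/-- The ideal `(L_1)` generated by the degree one part of the Rees ideal,
i.e. the defining ideal of the symmetric algebra. -/
noncomputable def symIdeal {R : Type} [CommRing R] {m : ℕ} (a : Fin m → R) :
    Ideal (MvPolynomial (Fin m) R) :=
  Ideal.span {g | g ∈ reesIdeal a ∧ g.IsHomogeneous 1}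

/-- Let `I = (a_1, …, a_n)` be an ideal of a commutative ring `R`,
`S = R[T_1, …, T_n]`, and `L` the defining ideal of the Rees algebra via `T_i ↦ a_i t`.
If `f ∈ L` is homogeneous of `T`-degree `d`, written `f = Σ f_i T_i` with each `f_i`
homogeneous of degree `d - 1`, and `Σ f_i a_i = 0` in `S`, then `f ∈ S_{d-1} · L_1`. -/
theorem syzygetic_lemma_one {R : Type} [CommRing R] (n : ℕ) (a : Fin n → R)
    (d : ℕ) (hd : 0 < d)
    (f : MvPolynomial (Fin n) R) (hfL : f ∈ reesIdeal a) (hfdeg : f.IsHomogeneous d)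
    (F : Fin n → MvPolynomial (Fin n) R)
    (hF : ∀ i, (F i).IsHomogeneous (d - 1))
    (hsum : f = ∑ i, F i * MvPolynomial.X i)
    (hsyz : ∑ i, F i * MvPolynomial.C (a i) = 0) :
    f ∈ (MvPolynomial.homogeneousSubmodule (Fin n) R (d - 1)) *
      ((reesIdeal a).restrictScalars R ⊓ MvPolynomial.homogeneousSubmodule (Fin n) R 1) := by
  classical
  set T : Finset ((Fin n) →₀ ℕ) := Finset.univ.biUnion (fun i => (F i).support) with hT
  have hFi : ∀ i, F i = ∑ μ ∈ T, monomial μ ((F i).coeff μ) := by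
    intro i
    conv_lhs => rw [(F i).as_sum]
    refine Finset.sum_subset ?_ ?_
    · intro μ hμ
      exact Finset.mem_biUnion.mpr ⟨i, Finset.mem_univ i, hμ⟩
    · intro μ _ hμ
      rw [notMem_support_iff.mp hμ, monomial_zero]
  have hf : f = ∑ μ ∈ T, (monomial μ (1 : R)) * (∑ i, C ((F i).coeff μ) * X i) := by
    rw [hsum]
    calc ∑ i, F i * X i
        = ∑ i, ∑ μ ∈ T, monomial μ ((F i).coeff μ) * X i := by
          refine Finset.sum_congr rfl fun i _ => ?_
          conv_lhs => rw [hFi i]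
          rw [Finset.sum_mul]
      _ = ∑ μ ∈ T, ∑ i, monomial μ ((F i).coeff μ) * X i := Finset.sum_comm
      _ = ∑ μ ∈ T, (monomial μ (1 : R)) * (∑ i, C ((F i).coeff μ) * X i) := by
          refine Finset.sum_congr rfl fun μ _ => ?_
          rw [Finset.mul_sum]
          refine Finset.sum_congr rfl fun i _ => ?_
          rw [← mul_assoc, mul_comm ((monomial μ) (1 : R)) (C ((F i).coeff μ)),
            C_mul_monomial, mul_one]
  rw [hf]
  apply Submodule.sum_mem
  intro μ hμ
  apply Submodule.mul_mem_mul
  · rw [mem_homogeneousSubmodule]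
    obtain ⟨i, _, hμi⟩ := Finset.mem_biUnion.mp hμ
    refine isHomogeneous_monomial _ ?_
    rw [Finsupp.degree_eq_weight_one]
    exact hF i (mem_support_iff.mp hμi)
  · constructor
    · -- membership in the Rees ideal
      show _ ∈ reesIdeal a
      have hc : ∑ i, (F i).coeff μ * a i = 0 := by
        have h := congrArg (MvPolynomial.coeff μ) hsyz
        rw [coeff_sum, coeff_zero] at h
        rw [← h]
        refine Finset.sum_congr rfl fun i _ => ?_
        rw [mul_comm (F i) (C (a i)), coeff_C_mul, mul_comm]
      simp only [reesIdeal, RingHom.mem_ker, AlgHom.toRingHom_eq_coe,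
        RingHom.coe_coe, map_sum, map_mul, aeval_C, aeval_X]
      calc ∑ i, (algebraMap R (Polynomial R)) ((F i).coeff μ) *
              (Polynomial.C (a i) * Polynomial.X)
          = ∑ i, Polynomial.C ((F i).coeff μ * a i) * Polynomial.X := by
            refine Finset.sum_congr rfl fun i _ => ?_
            simp [Polynomial.algebraMap_eq, map_mul, mul_assoc]
        _ = Polynomial.C (∑ i, (F i).coeff μ * a i) * Polynomial.X := by
            rw [map_sum, Finset.sum_mul]
        _ = 0 := by rw [hc]; simp
    · show _ ∈ homogeneousSubmodule (Fin n) R 1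
      rw [mem_homogeneousSubmodule]
      refine IsHomogeneous.sum _ _ _ fun i _ => ?_
      simpa using (isHomogeneous_C _ ((F i).coeff μ)).mul (isHomogeneous_X R i)
end

section
/- Let I be an ideal of a Noetherian ring with free presentation R^m →^φ R^n → I → 0, Z_1 = ker(R^n → I) the syzygy module, B_1 ⊂ Z_1 the submodule of Koszul syzygies, and δ(I) = (Z_1 ∩ I·R^n)/B_1. Then δ(I) ≅ L_2/(S_1·L_1), where L is the defining ideal of the Rees algebra in S = R[T_1,...,T_n] and L_i its degree-i component. -/
open MvPolynomial

/-- The module of syzygies `Z₁` of the tuple `a`. -/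
def syzMod {R : Type} [CommRing R] {m : ℕ} (a : Fin m → R) : Submodule R (Fin m → R) where
  carrier := {z | ∑ i, z i * a i = 0}
  add_mem' := by
    intro x y hx hy
    simp only [Set.mem_setOf_eq, Pi.add_apply, add_mul, Finset.sum_add_distrib] at *
    simp [hx, hy]
  zero_mem' := by simp
  smul_mem' := by
    intro c x hx
    simp only [Set.mem_setOf_eq, Pi.smul_apply, smul_eq_mul, mul_assoc] at *
    rw [← Finset.mul_sum, hx, mul_zero]

/-- The submodule `B₁ ⊆ Z₁` of Koszul syzygies of the tuple `a`. -/
def koszMod {R : Type} [CommRing R] {m : ℕ} (a : Fin m → R) : Submodule R (Fin m → R) :=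
  Submodule.span R {z : Fin m → R |
    ∃ i j, z = a j • (Pi.single i 1 : Fin m → R) - a i • (Pi.single j 1 : Fin m → R)}

/-!
A matrix `c = (c_ij)` over `R` determines both the quadratic form `F_c = ∑ c_ij T_i T_j ∈ S_2`
and the vector `z_c = (∑_j c_ij a_j)_i ∈ I·Rⁿ`, and both assignments are surjective.
Since `F_c(a_1 t, …, a_n t) = (∑_i (z_c)_i a_i) t²`, the form `F_c` lies in `L` exactly when `z_c`
is a syzygy. Matrices whose rows are syzygies (the kernel of `c ↦ z_c`) are sent onto `S_1·L_1`,
and alternating matrices (the kernel of `c ↦ F_c`) are sent onto the Koszul syzygies `B_1`.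
So `δ(I)` and `L_2/S_1L_1` are both the quotient of the matrices `c` with `F_c ∈ L` by the sum of
the two kernels.
-/

open Submodule LinearMap

namespace Submodule

theorem nonempty_map_mkQ_equiv_quotient {R C V : Type*} [CommRing R]
    [AddCommGroup C] [Module R C] [AddCommGroup V] [Module R V]
    (p : C →ₗ[R] V) (A D : Submodule R C) {X : Submodule R V} (hX : X ≤ range p)
    (hD : comap p X = D) :
    Nonempty (map (map p A).mkQ X ≃ₗ[R] D ⧸ comap D.subtype (A ⊔ ker p)) := by
  let f := (map p A).mkQ ∘ₗ p ∘ₗ D.subtype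
  have hker : ker f = comap D.subtype (A ⊔ ker p) := by
    rw [ker_comp, ker_mkQ, comap_comp, comap_map_eq]
  have hrange : range f = map (map p A).mkQ X := by
    rw [range_comp, range_comp, range_subtype, ← hD, map_comap_eq, inf_eq_right.2 hX]
  exact ⟨LinearEquiv.ofEq _ _ hrange.symm ≪≫ₗ f.quotKerEquivRange.symm ≪≫ₗ quotEquivOfEq _ _ hker⟩

theorem nonempty_map_mkQ_equiv_of_comap_eq {R C V W : Type*} [CommRing R]
    [AddCommGroup C] [Module R C] [AddCommGroup V] [Module R V] [AddCommGroup W] [Module R W]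
    (p : C →ₗ[R] V) (q : C →ₗ[R] W) {X : Submodule R V} {Y : Submodule R W}
    (hX : X ≤ range p) (hY : Y ≤ range q) (hXY : comap p X = comap q Y) :
    Nonempty (map (map p (ker q)).mkQ X ≃ₗ[R] map (map q (ker p)).mkQ Y) := by
  obtain ⟨eX⟩ := nonempty_map_mkQ_equiv_quotient p (ker q) _ hX rfl
  obtain ⟨eY⟩ := nonempty_map_mkQ_equiv_quotient q (ker p) _ hY hXY.symm
  exact ⟨eX ≪≫ₗ quotEquivOfEq _ _ (by rw [sup_comm]) ≪≫ₗ eY.symm⟩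

theorem ideal_smul_top_eq_pi {R ι : Type*} [CommSemiring R] [Finite ι] (I : Ideal R) :
    I • (⊤ : Submodule R (ι → R)) = pi Set.univ fun _ => I := by
  classical
  have := Fintype.ofFinite ι
  refine le_antisymm (smul_le.2 fun r hr z _ i _ => I.mul_mem_right (z i) hr) fun z hz => ?_
  rw [pi_eq_sum_univ z]
  exact sum_mem fun i _ => smul_mem_smul (hz i trivial) mem_top

end Submodule

namespace MvPolynomial

section CommSemiring

variable {R σ : Type*} [CommSemiring R] [Fintype σ]

noncomputable def linForm : (σ → R) →ₗ[R] MvPolynomial σ R :=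
  Fintype.linearCombination R X

noncomputable def quadForm : (σ → σ → R) →ₗ[R] MvPolynomial σ R where
  toFun c := ∑ i, X i * linForm (c i)
  map_add' c d := by simp [mul_add, Finset.sum_add_distrib]
  map_smul' r c := by simp [Finset.smul_sum]

theorem linForm_apply (v : σ → R) : linForm v = ∑ i, v i • (X i : MvPolynomial σ R) :=
  Fintype.linearCombination_apply _ _ _

theorem quadForm_apply (c : σ → σ → R) : quadForm c = ∑ i, X i * linForm (c i) := rfl

theorem quadForm_eq_sum (c : σ → σ → R) :
    quadForm c = ∑ i, ∑ j, c i j • (X i * X j : MvPolynomial σ R) := by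
  simp [quadForm_apply, linForm_apply, Finset.mul_sum]

theorem range_linForm : range (linForm : (σ → R) →ₗ[R] MvPolynomial σ R) =
    homogeneousSubmodule σ R 1 := by
  rw [linForm, Fintype.range_linearCombination, homogeneousSubmodule_one_eq_span_X]

theorem linForm_mul_linForm (u v : σ → R) :
    linForm u * linForm v = quadForm (fun i => u i • v) := by
  simp [quadForm_apply, linForm_apply (R := R) u, Finset.sum_mul]

theorem range_quadForm : range (quadForm : (σ → σ → R) →ₗ[R] MvPolynomial σ R) =
    homogeneousSubmodule σ R 2 := by
  rw [← homogeneousSubmodule_one_pow, pow_two, ← range_linForm]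
  refine le_antisymm ?_ (mul_le.2 ?_)
  · rintro _ ⟨c, rfl⟩
    exact sum_mem fun i _ =>
      mul_mem_mul (range_linForm (R := R) (σ := σ) ▸ isHomogeneous_X R i) (mem_range_self _ _)
  · rintro _ ⟨u, rfl⟩ _ ⟨v, rfl⟩
    exact ⟨_, (linForm_mul_linForm u v).symm⟩

theorem coeff_quadForm [DecidableEq σ] (c : σ → σ → R) (i j : σ) :
    coeff (Finsupp.single i 1 + Finsupp.single j 1) (quadForm c) =
      if i = j then c i i else c i j + c j i := by
  simp only [quadForm_eq_sum, coeff_sum, coeff_smul, X, monomial_mul, mul_one, coeff_monomial,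
    Finsupp.single_add_single_eq_single_add_single one_ne_zero one_ne_zero]
  split_ifs with h
  · subst h; simp [ite_and]
  · rw [Fintype.sum_eq_add i j h fun x hx => by simp [hx.1, hx.2]]
    simp [h, Ne.symm h]

theorem quadForm_transpose (u : σ → σ → R) : quadForm (fun i j => u j i) = quadForm u := by
  rw [quadForm_eq_sum, quadForm_eq_sum, Finset.sum_comm]
  refine Finset.sum_congr rfl fun j _ => Finset.sum_congr rfl fun i _ => ?_
  rw [mul_comm]

end CommSemiring

theorem quadForm_eq_zero_iff {R σ : Type*} [CommRing R] [Fintype σ] [LinearOrder σ]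
    {c : σ → σ → R} :
    quadForm c = 0 ↔ ∃ u : σ → σ → R, c = u - fun i j => u j i := by
  constructor
  · intro hc
    have hcoeff (i j : σ) := coeff_quadForm c i j
    simp only [hc, coeff_zero] at hcoeff
    refine ⟨fun i j => if i < j then c i j else 0, ?_⟩
    ext i j
    rcases lt_trichotomy i j with hij | rfl | hij
    · simp [hij, hij.not_gt]
    · simpa using (hcoeff i i).symm
    · have := hcoeff i j
      simp only [hij.ne', if_false] at this
      simp [hij, hij.not_gt, eq_neg_of_add_eq_zero_left this.symm]
  · rintro ⟨u, rfl⟩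
    rw [map_sub, quadForm_transpose, sub_self]

end MvPolynomial

section Rees

variable {R : Type} [CommRing R] {n : ℕ} (a : Fin n → R)

noncomputable def rowCombination : (Fin n → Fin n → R) →ₗ[R] (Fin n → R) :=
  (Fintype.linearCombination R a).compLeft (Fin n)

theorem rowCombination_apply (c : Fin n → Fin n → R) (i : Fin n) :
    rowCombination a c i = Fintype.linearCombination R a (c i) := rfl

theorem syzMod_eq_ker_linearCombination : syzMod a = ker (Fintype.linearCombination R a) := by
  ext z
  simp [syzMod, Fintype.linearCombination_apply]

theorem aeval_linForm (v : Fin n → R) :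
    aeval (fun i => Polynomial.C (a i) * Polynomial.X) (linForm v) =
      Polynomial.C (Fintype.linearCombination R a v) * Polynomial.X := by
  simp [linForm_apply, Fintype.linearCombination_apply, Finset.sum_mul, Polynomial.smul_eq_C_mul,
    mul_assoc]

theorem aeval_quadForm (c : Fin n → Fin n → R) :
    aeval (fun i => Polynomial.C (a i) * Polynomial.X) (quadForm c) =
      Polynomial.C (∑ i, rowCombination a c i * a i) * Polynomial.X ^ 2 := by
  simp only [quadForm_apply, map_sum, map_mul, aeval_X, aeval_linForm, Finset.sum_mul,
    rowCombination_apply]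
  refine Finset.sum_congr rfl fun i _ => ?_
  ring

theorem mem_reesIdeal_iff (F : MvPolynomial (Fin n) R) :
    F ∈ reesIdeal a ↔ aeval (fun i => Polynomial.C (a i) * Polynomial.X) F = 0 := Iff.rfl

theorem linForm_mem_reesIdeal_iff {v : Fin n → R} : linForm v ∈ reesIdeal a ↔ v ∈ syzMod a := by
  rw [mem_reesIdeal_iff, aeval_linForm, ← pow_one Polynomial.X, Polynomial.C_mul_X_pow_eq_monomial,
    Polynomial.monomial_eq_zero_iff, syzMod_eq_ker_linearCombination, mem_ker]

theorem quadForm_mem_reesIdeal_iff {c : Fin n → Fin n → R} :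
    quadForm c ∈ reesIdeal a ↔ rowCombination a c ∈ syzMod a := by
  rw [mem_reesIdeal_iff, aeval_quadForm, Polynomial.C_mul_X_pow_eq_monomial,
    Polynomial.monomial_eq_zero_iff]
  rfl

theorem restrictScalars_reesIdeal_inf_homogeneousSubmodule_one :
    (reesIdeal a).restrictScalars R ⊓ homogeneousSubmodule (Fin n) R 1 =
      map linForm (syzMod a) := by
  rw [← range_linForm, inf_comm, ← map_comap_eq]
  congr 1
  ext v
  exact linForm_mem_reesIdeal_iff a

theorem ker_rowCombination : ker (rowCombination a) = pi Set.univ fun _ => syzMod a := by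
  rw [rowCombination, ker_compLeft, syzMod_eq_ker_linearCombination]

theorem range_rowCombination :
    range (rowCombination a) = Ideal.span (Set.range a) • (⊤ : Submodule R (Fin n → R)) := by
  rw [rowCombination, range_compLeft, Fintype.range_linearCombination, ideal_smul_top_eq_pi]

theorem comap_quadForm_restrictScalars_reesIdeal_inf :
    comap quadForm ((reesIdeal a).restrictScalars R ⊓ homogeneousSubmodule (Fin n) R 2) =
      comap (rowCombination a) (syzMod a ⊓ Ideal.span (Set.range a) • ⊤) := by
  rw [comap_inf, comap_inf, ← range_quadForm, ← range_rowCombination,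
    range_le_iff_comap.1 le_rfl, range_le_iff_comap.1 le_rfl, inf_top_eq, inf_top_eq]
  ext c
  exact quadForm_mem_reesIdeal_iff a

theorem homogeneousSubmodule_one_mul_eq_map_ker_rowCombination :
    homogeneousSubmodule (Fin n) R 1 *
        ((reesIdeal a).restrictScalars R ⊓ homogeneousSubmodule (Fin n) R 1) =
      map quadForm (ker (rowCombination a)) := by
  rw [restrictScalars_reesIdeal_inf_homogeneousSubmodule_one, ker_rowCombination]
  refine le_antisymm (mul_le.2 ?_) (map_le_iff_le_comap.2 fun c hc => ?_)
  · rw [← range_linForm]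
    rintro _ ⟨u, rfl⟩ _ ⟨v, hv, rfl⟩
    exact ⟨_, fun i _ => smul_mem _ (u i) hv, (linForm_mul_linForm u v).symm⟩
  · rw [mem_comap, quadForm_apply]
    exact sum_mem fun i _ => mul_mem_mul ((mem_homogeneousSubmodule 1 _).2 (isHomogeneous_X R i))
      (mem_map_of_mem (f := linForm) (hc i trivial))

theorem rowCombination_sub_transpose (u : Fin n → Fin n → R) :
    rowCombination a (u - fun i j => u j i) =
      ∑ i, ∑ j, u i j • (a j • Pi.single i 1 - a i • Pi.single j 1) := by
  ext k
  simp [rowCombination_apply, Fintype.linearCombination_apply, Finset.sum_apply, Pi.single_apply,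
    sub_mul, mul_sub, Finset.sum_sub_distrib]

theorem koszMod_eq_map_ker_quadForm : koszMod a = map (rowCombination a) (ker quadForm) := by
  refine le_antisymm (span_le.2 ?_) ?_
  · rintro _ ⟨i, j, rfl⟩
    let u : Fin n → Fin n → R := Pi.single i (Pi.single j 1)
    refine ⟨u - fun k l => u l k, quadForm_eq_zero_iff.2 ⟨u, rfl⟩, ?_⟩
    rw [rowCombination_sub_transpose]
    simp [u, Pi.single_apply, ite_apply, ite_smul]
  · rintro _ ⟨c, hc, rfl⟩
    obtain ⟨u, rfl⟩ := quadForm_eq_zero_iff.1 hc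
    rw [rowCombination_sub_transpose]
    exact sum_mem fun i _ => sum_mem fun j _ => smul_mem _ _ (subset_span ⟨i, j, rfl⟩)

end Rees

theorem syzygetic_lemma_general {R : Type} [CommRing R]
    (n : ℕ) (a : Fin n → R) (I : Ideal R) (hI : I = Ideal.span (Set.range a)) :
    Nonempty (
      ↥(Submodule.map (koszMod a).mkQ
          (syzMod a ⊓ (I • (⊤ : Submodule R (Fin n → R)))))
      ≃ₗ[R]
      ↥(Submodule.map
          ((MvPolynomial.homogeneousSubmodule (Fin n) R 1 *
            ((reesIdeal a).restrictScalars R ⊓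
              MvPolynomial.homogeneousSubmodule (Fin n) R 1)).mkQ)
          ((reesIdeal a).restrictScalars R ⊓
            MvPolynomial.homogeneousSubmodule (Fin n) R 2))) := by
  subst hI
  rw [homogeneousSubmodule_one_mul_eq_map_ker_rowCombination, koszMod_eq_map_ker_quadForm]
  obtain ⟨e⟩ := nonempty_map_mkQ_equiv_of_comap_eq quadForm (rowCombination a)
    (by rw [range_quadForm]; exact inf_le_right) (by rw [range_rowCombination]; exact inf_le_right)
    (comap_quadForm_restrictScalars_reesIdeal_inf a)
  exact ⟨e.symm⟩

/-- **The syzygetic lemma.**  For an ideal `I = (a_1, …, a_n)` of a Noetherian ring,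
`δ(I) = (Z_1 ∩ I·Rⁿ)/B_1 ≅ L_2/(S_1·L_1)`, where `L` is the defining ideal of the Rees
algebra in `S = R[T_1, …, T_n]`. -/
theorem syzygetic_lemma {R : Type} [CommRing R] [IsNoetherianRing R]
    (n : ℕ) (a : Fin n → R) (I : Ideal R) (hI : I = Ideal.span (Set.range a)) :
    Nonempty (
      ↥(Submodule.map (koszMod a).mkQ
          (syzMod a ⊓ (I • (⊤ : Submodule R (Fin n → R)))))
      ≃ₗ[R]
      ↥(Submodule.map
          ((MvPolynomial.homogeneousSubmodule (Fin n) R 1 *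
            ((reesIdeal a).restrictScalars R ⊓
              MvPolynomial.homogeneousSubmodule (Fin n) R 1)).mkQ)
          ((reesIdeal a).restrictScalars R ⊓
            MvPolynomial.homogeneousSubmodule (Fin n) R 2))) :=
  syzygetic_lemma_general n a I hI
end
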